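/- arXiv:2204.07329 — 2 statements merged into one kernel-verified Lean document; each statement's English description precedes it below -/
import Mathlib

section
/- One-step worst-case CVaR bound: let ε ∈ (0,1), A ∈ ℝ^{n_x×n_x} with spectral norm ‖A‖ < 1, E ∈ ℝ^{n_x×n_w}, and Σ_w ∈ ℝ^{n_w×n_w} positive semidefinite. Then for every x ∈ ℝ^{n_x}: sup_{P ∈ M(Σ_w)} CVaR_ε^P[ ‖A x + E w‖² ] ≤ ‖A‖·‖x‖² + (1/(1 − ‖A‖))·(1/ε)·Tr(Σ_w Eᵀ E). -/
/-!
Take `β = ‖A‖ ‖x‖²` in the variational formula for CVaR. Since `‖A x‖ ≤ ‖A‖ ‖x‖`, the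
weighted Young inequality `(u + v)² ≤ u² / s + v² / (1 - s)` with `s = ‖A‖` gives the
pointwise bound `‖A x + E w‖² ≤ β + (1 - ‖A‖)⁻¹ ‖E w‖²`, so the excess loss
`(‖A x + E w‖² - β)₊` is at most `(1 - ‖A‖)⁻¹ ‖E w‖²`, whose expectation under any
`P ∈ M(Σ_w)` is `(1 - ‖A‖)⁻¹ Tr(Σ_w Eᵀ E)`.
-/

open MeasureTheory Matrix Kronecker

/-- Spectral norm (largest singular value) of a real matrix, as the operator norm of the
induced map between Euclidean spaces. -/
noncomputable def specNorm {m n : Type*} [Fintype m] [Fintype n] [DecidableEq n]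
    (A : Matrix m n ℝ) : ℝ :=
  ‖LinearMap.toContinuousLinearMap (Matrix.toEuclideanLin A)‖

/-- Conditional value-at-risk at level `ε` of the loss `L` under the measure `P`:
`CVaR_ε^P[L] = inf_β ( β + (1/ε) E_P[max (L ξ - β) 0] )`. -/
noncomputable def CVaR {ι : Type*} [Fintype ι] (ε : ℝ)
    (P : Measure (EuclideanSpace ℝ ι)) (L : EuclideanSpace ℝ ι → ℝ) : ℝ :=
  ⨅ β : ℝ, (β + ε⁻¹ * ∫ ξ, max (L ξ - β) 0 ∂P)

/-- The set `M(S)` of Borel probability measures with zero mean and covariance `S`. -/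
def MomentSet {ι : Type*} [Fintype ι] (S : Matrix ι ι ℝ) :
    Set (Measure (EuclideanSpace ℝ ι)) :=
  {P | IsProbabilityMeasure P ∧
       (∀ i, Integrable (fun ξ => ξ i) P) ∧
       (∀ i, ∫ ξ, ξ i ∂P = 0) ∧
       (∀ i j, Integrable (fun ξ => ξ i * ξ j) P) ∧
       (∀ i j, ∫ ξ, ξ i * ξ j ∂P = S i j)}

/-- Worst-case CVaR over the moment set `M(S)`. -/
noncomputable def wcCVaR {ι : Type*} [Fintype ι] (ε : ℝ) (S : Matrix ι ι ℝ)
    (L : EuclideanSpace ℝ ι → ℝ) : ℝ :=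
  ⨆ P : MomentSet S, CVaR ε (P : Measure (EuclideanSpace ℝ ι)) L

lemma add_sq_le_of_le_mul {u v X s : ℝ} (hu : 0 ≤ u) (hv : 0 ≤ v) (huX : u ≤ s * X)
    (hs0 : 0 ≤ s) (hs1 : s < 1) : (u + v) ^ 2 ≤ s * X ^ 2 + (1 - s)⁻¹ * v ^ 2 := by
  have h1s : 0 < 1 - s := by linarith
  rw [← sub_le_iff_le_add', inv_mul_eq_div, le_div_iff₀ h1s]
  nlinarith [mul_nonneg hs0 (sq_nonneg ((1 - s) * X - v)),
    mul_nonneg (sub_nonneg.2 huX) (show 0 ≤ s * X + u + 2 * v by nlinarith)]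

lemma norm_add_sq_le_of_norm_le {F : Type*} [SeminormedAddCommGroup F] {a b : F} {X s : ℝ}
    (ha : ‖a‖ ≤ s * X) (hs0 : 0 ≤ s) (hs1 : s < 1) :
    ‖a + b‖ ^ 2 ≤ s * X ^ 2 + (1 - s)⁻¹ * ‖b‖ ^ 2 :=
  (pow_le_pow_left₀ (norm_nonneg _) (norm_add_le a b) 2).trans
    (add_sq_le_of_le_mul (norm_nonneg a) (norm_nonneg b) ha hs0 hs1)

lemma integral_le_add_inv_mul_integral_max_sub {α : Type*} [MeasurableSpace α] {P : Measure α}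
    [IsProbabilityMeasure P] {ε : ℝ} (hε0 : 0 < ε) (hε1 : ε ≤ 1) {L : α → ℝ}
    (hL : Integrable L P) (β : ℝ) :
    ∫ ξ, L ξ ∂P ≤ β + ε⁻¹ * ∫ ξ, max (L ξ - β) 0 ∂P := by
  have hmax0 : 0 ≤ ∫ ξ, max (L ξ - β) 0 ∂P := integral_nonneg fun _ => le_max_right _ _
  calc ∫ ξ, L ξ ∂P = β + ∫ ξ, (L ξ - β) ∂P := by
        rw [integral_sub hL (integrable_const β)]; simp
    _ ≤ β + ∫ ξ, max (L ξ - β) 0 ∂P := by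
        have hLβ : Integrable (fun ξ => L ξ - β) P := hL.sub (integrable_const β)
        exact (add_le_add_iff_left β).2 (integral_mono hLβ hLβ.pos_part fun _ => le_max_left _ _)
    _ ≤ β + ε⁻¹ * ∫ ξ, max (L ξ - β) 0 ∂P := by
        gcongr
        exact le_mul_of_one_le_left hmax0 ((one_le_inv₀ hε0).2 hε1)

lemma CVaR_le {ι : Type*} [Fintype ι] {P : Measure (EuclideanSpace ℝ ι)}
    [IsProbabilityMeasure P] {ε : ℝ} (hε0 : 0 < ε) (hε1 : ε ≤ 1)
    {L : EuclideanSpace ℝ ι → ℝ} (hL : Integrable L P) (β : ℝ) :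
    CVaR ε P L ≤ β + ε⁻¹ * ∫ ξ, max (L ξ - β) 0 ∂P :=
  ciInf_le ⟨∫ ξ, L ξ ∂P, by
    rintro _ ⟨β', rfl⟩
    exact integral_le_add_inv_mul_integral_max_sub hε0 hε1 hL β'⟩ β

lemma CVaR_le_of_le_add {ι : Type*} [Fintype ι] {P : Measure (EuclideanSpace ℝ ι)}
    [IsProbabilityMeasure P] {ε : ℝ} (hε0 : 0 < ε) (hε1 : ε ≤ 1)
    {L g : EuclideanSpace ℝ ι → ℝ} {β : ℝ} (hLm : AEStronglyMeasurable L P) (hL0 : 0 ≤ L)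
    (hg : Integrable g P) (hg0 : 0 ≤ g) (hLg : ∀ ξ, L ξ ≤ β + g ξ) :
    CVaR ε P L ≤ β + ε⁻¹ * ∫ ξ, g ξ ∂P := by
  have hL : Integrable L P :=
    ((integrable_const β).add hg).mono' hLm <| .of_forall fun ξ => by
      rw [Real.norm_of_nonneg (hL0 ξ)]; exact hLg ξ
  refine (CVaR_le hε0 hε1 hL β).trans
    ((add_le_add_iff_left β).2 (mul_le_mul_of_nonneg_left ?_ (inv_nonneg.2 hε0.le)))
  have hLβ : Integrable (fun ξ => L ξ - β) P := hL.sub (integrable_const β)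
  exact integral_mono hLβ.pos_part hg fun ξ => max_le (by linarith [hLg ξ]) (hg0 ξ)

lemma norm_toEuclideanLin_sq {m n : Type*} [Fintype m] [Fintype n] [DecidableEq n]
    (E : Matrix m n ℝ) (w : EuclideanSpace ℝ n) :
    ‖toEuclideanLin E w‖ ^ 2 = ∑ j, ∑ k, (Eᵀ * E) k j * (w j * w k) := by
  simp only [EuclideanSpace.norm_sq_eq, toLpLin_apply, Real.norm_eq_abs, sq_abs]
  simp only [mulVec, dotProduct, sq, mul_apply, transpose_apply, Finset.sum_mul, Finset.mul_sum]
  rw [Finset.sum_comm]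
  refine Finset.sum_congr rfl fun j _ => ?_
  rw [Finset.sum_comm]
  exact Finset.sum_congr rfl fun k _ => Finset.sum_congr rfl fun i _ => by ring

section SecondMoments

variable {m n : Type*} [Fintype m] [Fintype n] [DecidableEq n] {P : Measure (EuclideanSpace ℝ n)}

lemma integrable_norm_toEuclideanLin_sq (h2 : ∀ i j, Integrable (fun ξ => ξ i * ξ j) P)
    (E : Matrix m n ℝ) :
    Integrable (fun w => ‖toEuclideanLin E w‖ ^ 2) P := by
  simp_rw [norm_toEuclideanLin_sq]
  exact integrable_finsetSum _ fun j _ => integrable_finsetSum _ fun k _ =>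
    (h2 j k).const_mul _

lemma integral_norm_toEuclideanLin_sq (h2 : ∀ i j, Integrable (fun ξ => ξ i * ξ j) P)
    (E : Matrix m n ℝ) {S : Matrix n n ℝ} (hS : ∀ i j, ∫ ξ, ξ i * ξ j ∂P = S i j) :
    ∫ w, ‖toEuclideanLin E w‖ ^ 2 ∂P = trace (S * Eᵀ * E) := by
  simp_rw [norm_toEuclideanLin_sq, Matrix.mul_assoc, trace, diag, mul_apply]
  rw [integral_finsetSum _ fun j _ => integrable_finsetSum _ fun k _ => (h2 j k).const_mul _]
  refine Finset.sum_congr rfl fun j _ => ?_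
  rw [integral_finsetSum _ fun k _ => (h2 j k).const_mul _]
  refine Finset.sum_congr rfl fun k _ => ?_
  rw [integral_const_mul, hS, mul_comm]

end SecondMoments

lemma trace_mul_transpose_mul_nonneg {m n : Type*} [Fintype m] [Fintype n]
    {S : Matrix n n ℝ} (hS : S.PosSemidef) (E : Matrix m n ℝ) :
    0 ≤ trace (S * Eᵀ * E) := by
  rw [trace_mul_comm, ← Matrix.mul_assoc]
  simpa using (hS.mul_mul_conjTranspose_same E).trace_nonneg

/-- one-step worst-case CVaR bound. -/
theorem stmt11 {nx nw : ℕ} (ε : ℝ) (hε : ε ∈ Set.Ioo (0 : ℝ) 1)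
    (A : Matrix (Fin nx) (Fin nx) ℝ) (E : Matrix (Fin nx) (Fin nw) ℝ)
    (Sw : Matrix (Fin nw) (Fin nw) ℝ)
    (hA : specNorm A < 1) (hSw : Sw.PosSemidef) :
    ∀ x : EuclideanSpace ℝ (Fin nx),
      wcCVaR ε Sw
        (fun w => ‖Matrix.toEuclideanLin A x + Matrix.toEuclideanLin E w‖ ^ 2) ≤
      specNorm A * ‖x‖ ^ 2 +
        (1 - specNorm A)⁻¹ * (ε⁻¹ * Matrix.trace (Sw * Eᵀ * E)) := by
  intro x
  have hs0 : 0 ≤ specNorm A := norm_nonneg _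
  have hAx : ‖toEuclideanLin A x‖ ≤ specNorm A * ‖x‖ :=
    (LinearMap.toContinuousLinearMap (toEuclideanLin A)).le_opNorm x
  -- `⨆` over an empty moment set is `0`, so the bound must be nonnegative.
  have hτ := trace_mul_transpose_mul_nonneg hSw E
  have h1s : 0 ≤ (1 - specNorm A)⁻¹ := inv_nonneg.2 (by linarith)
  refine Real.iSup_le (fun ⟨P, hP, _, _, h2, hS⟩ => ?_) (by have := hε.1; positivity)
  have := hP
  calc CVaR ε P (fun w => ‖toEuclideanLin A x + toEuclideanLin E w‖ ^ 2)
      ≤ specNorm A * ‖x‖ ^ 2 + ε⁻¹ * ∫ w, (1 - specNorm A)⁻¹ * ‖toEuclideanLin E w‖ ^ 2 ∂P :=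
        CVaR_le_of_le_add hε.1 hε.2.le (by fun_prop) (fun _ => sq_nonneg _)
          ((integrable_norm_toEuclideanLin_sq h2 E).const_mul _) (fun _ => by positivity)
          fun _ => norm_add_sq_le_of_norm_le hAx hs0 hA
    _ = _ := by rw [integral_const_mul, integral_norm_toEuclideanLin_sq h2 E hS]; ring
end

section
/- Worst-case CVaR ultimate bound with bounded input (Theorem 3): consider x_{t+1} = A x_t + D v_t + E w_t with spectral norm ‖A‖ < 1, Σ_w positive semidefinite, and inputs satisfying ‖v_t‖ ≤ d for all t. Let P := Σ_{k=0}^∞ A^k E Σ_w Eᵀ (Aᵀ)^k. If r > 0 satisfies r² > ( ‖D‖·d/(1 − ‖A‖) + √((1/ε)·Tr(P)) )², then for every initial state x₀ there exists T > 0 such that for all t ≥ T and all input sequences with ‖v_τ‖ ≤ d: sup_{P ∈ M_t} CVaR_ε^P[ ‖A^t x₀ + G_t v̄_t + H_t w̄_t‖² − r² ] ≤ 0. -/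
open MeasureTheory Matrix Kronecker

/-- The block matrix `H_t = [A^(t-1) E, A^(t-2) E, ..., E]`, viewed as a matrix acting on the
stacked disturbance vector `w̄_t = (w_0, ..., w_(t-1))` (indexed by `Fin t × Fin nw`),
so that `H_t w̄_t = Σ_k A^(t-1-k) E w_k`. -/
noncomputable def Hmat {nx nw : ℕ} (A : Matrix (Fin nx) (Fin nx) ℝ)
    (E : Matrix (Fin nx) (Fin nw) ℝ) (t : ℕ) :
    Matrix (Fin nx) (Fin t × Fin nw) ℝ :=
  Matrix.of fun i p => (A ^ (t - 1 - (p.1 : ℕ)) * E) i p.2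

/-!
Write the state as `c + H_t w̄_t` with deterministic part `c = A^t x₀ + Σ_k A^k D v_{t-1-k}`.
For `θ ∈ (0, 1)` one has `‖c + y‖² ≤ ‖c‖²/θ + ‖y‖²/(1-θ)`, so the choice `β = ‖c‖²/θ - r²`
in the infimum defining CVaR gives, for every `P ∈ M_t`,
`CVaR ≤ ‖c‖²/θ + ε⁻¹ E‖H_t w̄_t‖²/(1-θ) - r²`, where the second moment is
`Tr (H_t (I_t ⊗ Σ_w) H_tᵀ) = Σ_{k<t} Tr (A^k E Σ_w Eᵀ Aᵀ^k) ≤ Tr P`.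
A suitable `θ` makes this nonpositive as soon as `‖c‖ + √(ε⁻¹ Tr P) < r`, and
`‖c‖ ≤ ‖A‖^t ‖x₀‖ + ‖D‖ d / (1 - ‖A‖)` where `‖A‖^t → 0`.
-/

theorem summable_pow_mul_mul_pow {R : Type*} [NormedRing R] [CompleteSpace R] {a b : R}
    (x : R) (h : ‖a‖ * ‖b‖ < 1) : Summable fun k : ℕ => a ^ k * x * b ^ k := by
  refine (summable_nat_add_iff 1).mp <| Summable.of_norm_bounded
    (((summable_geometric_of_lt_one (by positivity) h).mul_left ‖x‖).comp_injective
      (add_left_injective 1)) fun k => ?_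
  calc ‖a ^ (k + 1) * x * b ^ (k + 1)‖ ≤ ‖a ^ (k + 1)‖ * ‖x‖ * ‖b ^ (k + 1)‖ := norm_mul₃_le
    _ ≤ ‖a‖ ^ (k + 1) * ‖x‖ * ‖b‖ ^ (k + 1) := by
        gcongr <;> exact norm_pow_le' _ k.succ_pos
    _ = ‖x‖ * (‖a‖ * ‖b‖) ^ (k + 1) := by ring

theorem norm_add_sq_le_div_add_div {F : Type*} [SeminormedAddCommGroup F] (x y : F) {θ : ℝ}
    (hθ : θ ∈ Set.Ioo (0 : ℝ) 1) : ‖x + y‖ ^ 2 ≤ ‖x‖ ^ 2 / θ + ‖y‖ ^ 2 / (1 - θ) := by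
  obtain ⟨hθ0, hθ1⟩ := hθ
  have h1θ : 0 < 1 - θ := sub_pos.2 hθ1
  calc ‖x + y‖ ^ 2 ≤ (‖x‖ + ‖y‖) ^ 2 := by gcongr; exact norm_add_le x y
    _ ≤ ‖x‖ ^ 2 / θ + ‖y‖ ^ 2 / (1 - θ) := by
        rw [div_add_div _ _ hθ0.ne' h1θ.ne', le_div_iff₀ (by positivity)]
        nlinarith [sq_nonneg ((1 - θ) * ‖x‖ - θ * ‖y‖)]

/-- Splitting the slack `r - c - s` evenly, `θ = (r + c - s) / (2r)` gives `c²/θ ≤ rc` and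
`s²/(1-θ) ≤ rs`. -/
theorem exists_sq_div_add_sq_div_le {c s r : ℝ} (hc : 0 ≤ c) (hs : 0 ≤ s) (h : c + s < r) :
    ∃ θ ∈ Set.Ioo (0 : ℝ) 1, c ^ 2 / θ + s ^ 2 / (1 - θ) ≤ r ^ 2 := by
  have hr : 0 < r := by linarith
  have hθ : 1 - (r + c - s) / (2 * r) = (r - c + s) / (2 * r) := by field_simp; ring
  refine ⟨(r + c - s) / (2 * r), ⟨div_pos (by linarith) (by linarith), ?_⟩, ?_⟩
  · rw [div_lt_one (by positivity)]; linarith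
  have hc' : c ^ 2 / ((r + c - s) / (2 * r)) ≤ r * c := by
    rw [div_div_eq_mul_div, div_le_iff₀ (by linarith)]
    nlinarith [mul_nonneg (mul_nonneg hr.le hc) (sub_nonneg.2 h.le)]
  have hs' : s ^ 2 / ((r - c + s) / (2 * r)) ≤ r * s := by
    rw [div_div_eq_mul_div, div_le_iff₀ (by linarith)]
    nlinarith [mul_nonneg (mul_nonneg hr.le hs) (sub_nonneg.2 h.le)]
  rw [hθ]
  nlinarith

theorem CVaR_norm_add_sq_sub_sq_nonpos {ι F : Type*} [Fintype ι] [SeminormedAddCommGroup F]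
    {ε : ℝ} (hε : 0 < ε) {P : Measure (EuclideanSpace ℝ ι)} (u : F)
    {f : EuclideanSpace ℝ ι → F} (hf : Integrable (fun w => ‖f w‖ ^ 2) P) {r : ℝ}
    (hr : ‖u‖ + √(ε⁻¹ * ∫ w, ‖f w‖ ^ 2 ∂P) < r) :
    CVaR ε P (fun w => ‖u + f w‖ ^ 2 - r ^ 2) ≤ 0 := by
  obtain ⟨θ, hθ, hθr⟩ := exists_sq_div_add_sq_div_le (norm_nonneg u) (Real.sqrt_nonneg _) hr
  set q := ∫ w, ‖f w‖ ^ 2 ∂P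
  have hq : 0 ≤ q := integral_nonneg fun w => by positivity
  rw [Real.sq_sqrt (by positivity)] at hθr
  have h1θ : 0 < 1 - θ := sub_pos.2 hθ.2
  have hexcess (w : EuclideanSpace ℝ ι) :
      max (‖u + f w‖ ^ 2 - r ^ 2 - (‖u‖ ^ 2 / θ - r ^ 2)) 0 ≤ ‖f w‖ ^ 2 / (1 - θ) :=
    max_le (by linarith [norm_add_sq_le_div_add_div u (f w) hθ]) (by positivity)
  have hmean : ∫ w, max (‖u + f w‖ ^ 2 - r ^ 2 - (‖u‖ ^ 2 / θ - r ^ 2)) 0 ∂P ≤ q / (1 - θ) :=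
    (integral_mono_of_nonneg (ae_of_all _ fun w => le_max_right _ _) (hf.div_const _)
      (ae_of_all _ hexcess)).trans_eq (integral_div _ _)
  refine Real.iInf_nonpos' ⟨‖u‖ ^ 2 / θ - r ^ 2, ?_⟩
  calc ‖u‖ ^ 2 / θ - r ^ 2 + ε⁻¹ * ∫ w, max (‖u + f w‖ ^ 2 - r ^ 2 - (‖u‖ ^ 2 / θ - r ^ 2)) 0 ∂P
      ≤ ‖u‖ ^ 2 / θ - r ^ 2 + ε⁻¹ * (q / (1 - θ)) := by gcongr
    _ = ‖u‖ ^ 2 / θ + ε⁻¹ * q / (1 - θ) - r ^ 2 := by ring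
    _ ≤ 0 := by linarith

section SpecNorm

open scoped Matrix.Norms.L2Operator

variable {l m n : Type*} [Fintype l] [Fintype m] [Fintype n] [DecidableEq n]

theorem specNorm_eq_l2_opNorm (A : Matrix m n ℝ) : specNorm A = ‖A‖ := rfl

theorem specNorm_nonneg (A : Matrix m n ℝ) : 0 ≤ specNorm A := norm_nonneg _

theorem specNorm_mul_le [DecidableEq l] (A : Matrix m l ℝ) (B : Matrix l n ℝ) :
    specNorm (A * B) ≤ specNorm A * specNorm B :=
  Matrix.l2_opNorm_mul A B

theorem specNorm_pow_le (A : Matrix n n ℝ) (k : ℕ) : specNorm (A ^ k) ≤ specNorm A ^ k := by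
  rcases k.eq_zero_or_pos with rfl | hk
  · rw [pow_zero, pow_zero, specNorm_eq_l2_opNorm, Matrix.cstar_norm_def, map_one]
    exact ContinuousLinearMap.norm_id_le
  · exact norm_pow_le' A hk

theorem specNorm_transpose [DecidableEq m] (A : Matrix m n ℝ) : specNorm Aᵀ = specNorm A := by
  simpa [specNorm_eq_l2_opNorm] using Matrix.l2_opNorm_conjTranspose A

theorem norm_toEuclideanLin_le (A : Matrix m n ℝ) (x : EuclideanSpace ℝ n) :
    ‖Matrix.toEuclideanLin A x‖ ≤ specNorm A * ‖x‖ :=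
  (LinearMap.toContinuousLinearMap (Matrix.toEuclideanLin A)).le_opNorm x

theorem summable_pow_mul_mul_transpose_pow {A : Matrix n n ℝ} (hA : specNorm A < 1)
    (Φ : Matrix n n ℝ) : Summable fun k : ℕ => A ^ k * Φ * Aᵀ ^ k := by
  refine summable_pow_mul_mul_pow Φ ?_
  rw [← specNorm_eq_l2_opNorm, ← specNorm_eq_l2_opNorm, specNorm_transpose]
  nlinarith [specNorm_nonneg A]

end SpecNorm

theorem trace_sum_range_le_trace_tsum {n : Type*} [Fintype n] [DecidableEq n]
    {A Φ : Matrix n n ℝ} (hA : specNorm A < 1) (hΦ : Φ.PosSemidef) (t : ℕ) :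
    (∑ k ∈ Finset.range t, A ^ k * Φ * Aᵀ ^ k).trace ≤ (∑' k, A ^ k * Φ * Aᵀ ^ k).trace := by
  rw [Matrix.trace_sum]
  refine sum_le_hasSum _ (fun k _ => ?_) ((summable_pow_mul_mul_transpose_pow hA Φ).hasSum.map
    (Matrix.traceAddMonoidHom n ℝ) continuous_id.matrix_trace)
  simpa [Matrix.transpose_pow] using (hΦ.mul_mul_conjTranspose_same (A ^ k)).trace_nonneg

section MomentSet

variable {ι κ : Type*} [Fintype ι] [Fintype κ] [DecidableEq ι]

theorem norm_toEuclideanLin_sq_s14 (H : Matrix κ ι ℝ) (w : EuclideanSpace ℝ ι) :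
    ‖Matrix.toEuclideanLin H w‖ ^ 2 = ∑ a, ∑ p, ∑ q, H a p * H a q * (w p * w q) := by
  rw [EuclideanSpace.norm_eq, Real.sq_sqrt (by positivity)]
  refine Finset.sum_congr rfl fun a _ => ?_
  rw [Real.norm_eq_abs, sq_abs, sq, Matrix.ofLp_toLpLin, Matrix.toLin'_apply]
  simp only [Matrix.mulVec, dotProduct, Finset.sum_mul_sum]
  exact Finset.sum_congr rfl fun p _ => Finset.sum_congr rfl fun q _ => by ring

variable {S : Matrix ι ι ℝ} {P : Measure (EuclideanSpace ℝ ι)}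

theorem integrable_norm_toEuclideanLin_sq_s14 (hP : P ∈ MomentSet S) (H : Matrix κ ι ℝ) :
    Integrable (fun w => ‖Matrix.toEuclideanLin H w‖ ^ 2) P := by
  simp only [norm_toEuclideanLin_sq_s14]
  exact integrable_finsetSum _ fun a _ => integrable_finsetSum _ fun p _ =>
    integrable_finsetSum _ fun q _ => (hP.2.2.2.1 p q).const_mul _

theorem integral_norm_toEuclideanLin_sq_s14 (hP : P ∈ MomentSet S) (H : Matrix κ ι ℝ) :
    ∫ w, ‖Matrix.toEuclideanLin H w‖ ^ 2 ∂P = (H * S * Hᵀ).trace := by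
  simp only [norm_toEuclideanLin_sq_s14]
  rw [integral_finsetSum _ fun a _ => integrable_finsetSum _ fun p _ =>
    integrable_finsetSum _ fun q _ => (hP.2.2.2.1 p q).const_mul _]
  simp only [Matrix.trace, Matrix.diag, Matrix.mul_apply, Matrix.transpose_apply, Finset.sum_mul]
  refine Finset.sum_congr rfl fun a _ => ?_
  rw [integral_finsetSum _ fun p _ => integrable_finsetSum _ fun q _ =>
    (hP.2.2.2.1 p q).const_mul _, Finset.sum_comm]
  refine Finset.sum_congr rfl fun p _ => ?_
  rw [integral_finsetSum _ fun q _ => (hP.2.2.2.1 p q).const_mul _]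
  refine Finset.sum_congr rfl fun q _ => ?_
  rw [integral_const_mul, hP.2.2.2.2 p q]
  ring

end MomentSet

theorem of_blockRow_mul_kronecker_mul_transpose {m κ n R : Type*} [Fintype κ] [DecidableEq κ]
    [Fintype n] [CommSemiring R] (B : κ → Matrix m n R) (S : Matrix n n R) :
    Matrix.of (fun i p => B p.1 i p.2 : m → κ × n → R) * ((1 : Matrix κ κ R) ⊗ₖ S) *
      (Matrix.of fun i p => B p.1 i p.2 : Matrix m (κ × n) R)ᵀ = ∑ k, B k * S * (B k)ᵀ := by
  ext i j
  simp [Matrix.mul_apply, Matrix.sum_apply, Matrix.one_apply, Fintype.sum_prod_type]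

theorem Hmat_mul_kronecker_mul_transpose {nx nw : ℕ} (A : Matrix (Fin nx) (Fin nx) ℝ)
    (E : Matrix (Fin nx) (Fin nw) ℝ) (Sw : Matrix (Fin nw) (Fin nw) ℝ) (t : ℕ) :
    Hmat A E t * ((1 : Matrix (Fin t) (Fin t) ℝ) ⊗ₖ Sw) * (Hmat A E t)ᵀ =
      ∑ k ∈ Finset.range t, A ^ k * (E * Sw * Eᵀ) * Aᵀ ^ k := by
  rw [Hmat, of_blockRow_mul_kronecker_mul_transpose (fun k : Fin t => A ^ (t - 1 - k) * E),
    Fin.sum_univ_eq_sum_range (fun k => (A ^ (t - 1 - k) * E) * Sw * (A ^ (t - 1 - k) * E)ᵀ),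
    Finset.sum_range_reflect (fun k => (A ^ k * E) * Sw * (A ^ k * E)ᵀ)]
  refine Finset.sum_congr rfl fun k _ => ?_
  rw [Matrix.transpose_mul, Matrix.transpose_pow]
  simp only [Matrix.mul_assoc]

theorem norm_sum_toEuclideanLin_pow_mul_le {n m : Type*} [Fintype n] [Fintype m] [DecidableEq n]
    [DecidableEq m] {A : Matrix n n ℝ} (hA : specNorm A < 1) (D : Matrix n m ℝ) {d : ℝ}
    {u : ℕ → EuclideanSpace ℝ m} (hu : ∀ k, ‖u k‖ ≤ d) (t : ℕ) :
    ‖∑ k ∈ Finset.range t, Matrix.toEuclideanLin (A ^ k * D) (u k)‖ ≤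
      specNorm D * d / (1 - specNorm A) := by
  have hρ := specNorm_nonneg A
  have hDd : 0 ≤ specNorm D * d := mul_nonneg (specNorm_nonneg _) ((norm_nonneg _).trans (hu 0))
  have hterm (k : ℕ) :
      ‖Matrix.toEuclideanLin (A ^ k * D) (u k)‖ ≤ specNorm A ^ k * (specNorm D * d) :=
    calc ‖Matrix.toEuclideanLin (A ^ k * D) (u k)‖ ≤ specNorm (A ^ k * D) * ‖u k‖ :=
          norm_toEuclideanLin_le _ _
      _ ≤ specNorm A ^ k * specNorm D * d :=
          mul_le_mul ((specNorm_mul_le _ _).trans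
            (mul_le_mul_of_nonneg_right (specNorm_pow_le A k) (specNorm_nonneg _)))
            (hu k) (norm_nonneg _) (mul_nonneg (pow_nonneg hρ k) (specNorm_nonneg _))
      _ = _ := mul_assoc _ _ _
  calc _ ≤ ∑ k ∈ Finset.range t, specNorm A ^ k * (specNorm D * d) :=
        (norm_sum_le _ _).trans (Finset.sum_le_sum fun k _ => hterm k)
    _ ≤ (∑' k, specNorm A ^ k) * (specNorm D * d) := by
        rw [← Finset.sum_mul]
        gcongr
        exact (summable_geometric_of_lt_one hρ hA).sum_le_tsum _ fun k _ => by positivity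
    _ = specNorm D * d / (1 - specNorm A) := by
        rw [tsum_geometric_of_lt_one hρ hA, div_eq_inv_mul, mul_comm]

/-- Theorem 3: worst-case CVaR ultimate bound with bounded input for
`x_{t+1} = A x_t + D v_t + E w_t`. -/
theorem stmt14 {nx nv nw : ℕ} (ε : ℝ) (hε : ε ∈ Set.Ioo (0 : ℝ) 1)
    (A : Matrix (Fin nx) (Fin nx) ℝ) (D : Matrix (Fin nx) (Fin nv) ℝ)
    (E : Matrix (Fin nx) (Fin nw) ℝ) (Sw : Matrix (Fin nw) (Fin nw) ℝ)
    (hA : specNorm A < 1) (hSw : Sw.PosSemidef)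
    (d : ℝ) (r : ℝ) (hr : 0 < r)
    (hr2 : (specNorm D * d / (1 - specNorm A) +
      Real.sqrt (ε⁻¹ *
        Matrix.trace (∑' k : ℕ, A ^ k * (E * Sw * Eᵀ) * (Aᵀ) ^ k))) ^ 2 < r ^ 2) :
    ∀ x₀ : EuclideanSpace ℝ (Fin nx), ∃ T : ℕ, 0 < T ∧ ∀ t ≥ T,
      ∀ v : ℕ → EuclideanSpace ℝ (Fin nv), (∀ τ, ‖v τ‖ ≤ d) →
      wcCVaR ε ((1 : Matrix (Fin t) (Fin t) ℝ) ⊗ₖ Sw)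
        (fun w => ‖Matrix.toEuclideanLin (A ^ t) x₀ +
          (∑ k ∈ Finset.range t, Matrix.toEuclideanLin (A ^ k * D) (v (t - 1 - k))) +
          Matrix.toEuclideanLin (Hmat A E t) w‖ ^ 2 - r ^ 2) ≤ 0 := by
  intro x₀
  set K := specNorm D * d / (1 - specNorm A) +
    √(ε⁻¹ * (∑' k : ℕ, A ^ k * (E * Sw * Eᵀ) * Aᵀ ^ k).trace)
  have hK : K < r := lt_of_pow_lt_pow_left₀ 2 hr.le hr2
  have hfree : ∀ᶠ t in Filter.atTop, specNorm A ^ t * ‖x₀‖ < r - K :=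
    ((tendsto_pow_atTop_nhds_zero_of_lt_one (specNorm_nonneg _) hA).mul_const ‖x₀‖
      |>.eventually_lt_const (by simpa using hK))
  obtain ⟨T, hT⟩ := Filter.eventually_atTop.1 hfree
  refine ⟨T + 1, T.succ_pos, fun t ht v hv => Real.iSup_nonpos fun ⟨P, hP⟩ => ?_⟩
  refine CVaR_norm_add_sq_sub_sq_nonpos (f := Matrix.toEuclideanLin (Hmat A E t)) hε.1 _
    (integrable_norm_toEuclideanLin_sq_s14 hP _) ?_
  rw [integral_norm_toEuclideanLin_sq_s14 hP, Hmat_mul_kronecker_mul_transpose]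
  have hfree_t : ‖Matrix.toEuclideanLin (A ^ t) x₀‖ ≤ specNorm A ^ t * ‖x₀‖ :=
    (norm_toEuclideanLin_le _ _).trans
      (mul_le_mul_of_nonneg_right (specNorm_pow_le A t) (norm_nonneg _))
  have hforced := norm_sum_toEuclideanLin_pow_mul_le hA D (u := fun k => v (t - 1 - k))
    (fun k => hv _) t
  have hnoise : √(ε⁻¹ * (∑ k ∈ Finset.range t, A ^ k * (E * Sw * Eᵀ) * Aᵀ ^ k).trace) ≤
      √(ε⁻¹ * (∑' k : ℕ, A ^ k * (E * Sw * Eᵀ) * Aᵀ ^ k).trace) := by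
    gcongr
    · exact inv_nonneg.2 hε.1.le
    · exact trace_sum_range_le_trace_tsum hA (by simpa using hSw.mul_mul_conjTranspose_same E) t
  linarith [norm_add_le (Matrix.toEuclideanLin (A ^ t) x₀)
    (∑ k ∈ Finset.range t, Matrix.toEuclideanLin (A ^ k * D) (v (t - 1 - k))), hT t (by omega)]
end
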